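/- arXiv:1910.01498 — 3 statements merged into one kernel-verified Lean document; each statement's English description precedes it below -/
import Mathlib

section
/- Let a ∈ Sⁿ with aᵀe_{n+1} < cos θ for some θ ∈ (0, π/2), and define c = J_n a / (cos θ - e_{n+1}ᵀa) ∈ ℝⁿ and r = sin θ / (cos θ - e_{n+1}ᵀa) > 0, where J_n a denotes the first n coordinates of a. Then the stereographic projection ψ maps the open spherical cap O = {x ∈ Sⁿ : xᵀa > cos θ} onto the open Euclidean ball {ξ ∈ ℝⁿ : ‖ξ - c‖ < r}. -/
open scoped BigOperators

/-- Stereographic projection from the north pole. -/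
noncomputable def stereo (n : ℕ) (x : EuclideanSpace ℝ (Fin (n + 1))) :
    EuclideanSpace ℝ (Fin n) :=
  WithLp.toLp 2 (fun i : Fin n => x i.castSucc / (1 - x (Fin.last n)))

/-!
Off the north pole, `stereo` is inverted by `σ ξ = (2 ξ, ‖ξ‖² - 1) / (‖ξ‖² + 1)`, and the cap misses
the pole, so its image is `σ ⁻¹' O`. Writing `a = (a', aₙ)` and `d = cos θ - aₙ`, the relations
`‖a'‖² = 1 - aₙ²` and `sin² θ = 1 - cos² θ` give
`(‖ξ‖² + 1) (⟪σ ξ, a⟫ - cos θ) = d (r² - ‖ξ - c‖²)`,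
so for `d > 0` the cap condition on `σ ξ` is exactly the ball condition on `ξ`.
-/

open RealInnerProductSpace

namespace EuclideanSpace

theorem sum_mul_eq_inner {ι : Type*} [Fintype ι] (x y : EuclideanSpace ℝ ι) :
    ∑ i, x i * y i = ⟪x, y⟫ := by
  simp only [PiLp.inner_apply, RCLike.inner_apply, conj_trivial, mul_comm]

variable {n : ℕ}

def init (x : EuclideanSpace ℝ (Fin (n + 1))) : EuclideanSpace ℝ (Fin n) :=
  WithLp.toLp 2 (Fin.init x)

@[simp]
theorem init_apply (x : EuclideanSpace ℝ (Fin (n + 1))) (i : Fin n) :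
    init x i = x i.castSucc := rfl

theorem ext_init_last {x y : EuclideanSpace ℝ (Fin (n + 1))}
    (hinit : init x = init y) (hlast : x (Fin.last n) = y (Fin.last n)) : x = y := by
  ext i
  refine Fin.lastCases ?_ (fun j => ?_) i
  · exact hlast
  · exact congrArg (· j) hinit

theorem norm_sq_eq_norm_init_sq_add (x : EuclideanSpace ℝ (Fin (n + 1))) :
    ‖x‖ ^ 2 = ‖init x‖ ^ 2 + x (Fin.last n) ^ 2 := by
  simp only [EuclideanSpace.norm_sq_eq, Real.norm_eq_abs, sq_abs, Fin.sum_univ_castSucc,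
    init_apply]

theorem inner_eq_inner_init_add (x y : EuclideanSpace ℝ (Fin (n + 1))) :
    ⟪x, y⟫ = ⟪init x, init y⟫ + x (Fin.last n) * y (Fin.last n) := by
  simp only [PiLp.inner_apply, Fin.sum_univ_castSucc, init_apply, RCLike.inner_apply,
    conj_trivial]
  ring

theorem norm_init_sq_of_norm_eq_one {x : EuclideanSpace ℝ (Fin (n + 1))} (hx : ‖x‖ = 1) :
    ‖init x‖ ^ 2 = 1 - x (Fin.last n) ^ 2 := by
  have h := norm_sq_eq_norm_init_sq_add x
  rw [hx] at h
  linarith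

end EuclideanSpace

open EuclideanSpace

noncomputable def invStereo (n : ℕ) (ξ : EuclideanSpace ℝ (Fin n)) :
    EuclideanSpace ℝ (Fin (n + 1)) :=
  WithLp.toLp 2 (Fin.snoc (WithLp.ofLp ((2 / (‖ξ‖ ^ 2 + 1)) • ξ))
    ((‖ξ‖ ^ 2 - 1) / (‖ξ‖ ^ 2 + 1)))

section Stereographic

variable {n : ℕ}

@[simp]
theorem init_invStereo (ξ : EuclideanSpace ℝ (Fin n)) :
    init (invStereo n ξ) = (2 / (‖ξ‖ ^ 2 + 1)) • ξ := by
  simp [invStereo, init]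

@[simp]
theorem invStereo_last (ξ : EuclideanSpace ℝ (Fin n)) :
    invStereo n ξ (Fin.last n) = (‖ξ‖ ^ 2 - 1) / (‖ξ‖ ^ 2 + 1) := by
  simp [invStereo]

theorem stereo_eq_smul_init (x : EuclideanSpace ℝ (Fin (n + 1))) :
    stereo n x = (1 - x (Fin.last n))⁻¹ • init x := by
  ext i
  simp [stereo, div_eq_inv_mul]

theorem norm_invStereo (ξ : EuclideanSpace ℝ (Fin n)) : ‖invStereo n ξ‖ = 1 := by
  refine (pow_eq_one_iff_of_nonneg (norm_nonneg _) two_ne_zero).mp ?_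
  rw [norm_sq_eq_norm_init_sq_add, init_invStereo, invStereo_last, norm_smul, mul_pow,
    Real.norm_of_nonneg (by positivity)]
  field_simp
  ring

theorem stereo_invStereo (ξ : EuclideanSpace ℝ (Fin n)) : stereo n (invStereo n ξ) = ξ := by
  have hlast : 1 - (‖ξ‖ ^ 2 - 1) / (‖ξ‖ ^ 2 + 1) = 2 / (‖ξ‖ ^ 2 + 1) := by
    field_simp
    ring
  rw [stereo_eq_smul_init, init_invStereo, invStereo_last, hlast, smul_smul,
    inv_mul_cancel₀ (by positivity), one_smul]

theorem invStereo_stereo {x : EuclideanSpace ℝ (Fin (n + 1))} (hx : ‖x‖ = 1)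
    (hN : x (Fin.last n) ≠ 1) : invStereo n (stereo n x) = x := by
  have ht : 0 < 1 - x (Fin.last n) := by
    have hle : x (Fin.last n) ≤ 1 :=
      (le_abs_self _).trans ((PiLp.norm_apply_le x _).trans_eq hx)
    exact sub_pos.2 (hle.lt_of_ne hN)
  have hξ : ‖stereo n x‖ ^ 2 + 1 = 2 / (1 - x (Fin.last n)) := by
    rw [stereo_eq_smul_init, norm_smul, mul_pow, norm_init_sq_of_norm_eq_one hx,
      Real.norm_of_nonneg (by positivity)]
    field_simp
    ring
  apply ext_init_last
  · rw [init_invStereo, hξ, stereo_eq_smul_init, smul_smul, div_div_cancel₀ two_ne_zero,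
      mul_inv_cancel₀ ht.ne', one_smul]
  · rw [invStereo_last, show ‖stereo n x‖ ^ 2 - 1 = ‖stereo n x‖ ^ 2 + 1 - 2 by ring, hξ]
    field_simp
    ring

theorem stereo_image_eq_preimage_invStereo {S : Set (EuclideanSpace ℝ (Fin (n + 1)))}
    (hS : ∀ x ∈ S, ‖x‖ = 1 ∧ x (Fin.last n) ≠ 1) : stereo n '' S = invStereo n ⁻¹' S := by
  ext ξ
  constructor
  · rintro ⟨x, hx, rfl⟩
    rw [Set.mem_preimage, invStereo_stereo (hS x hx).1 (hS x hx).2]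
    exact hx
  · exact fun hξ => ⟨_, hξ, stereo_invStereo ξ⟩

theorem last_ne_one_of_last_lt_inner {x a : EuclideanSpace ℝ (Fin (n + 1))} (hx : ‖x‖ = 1)
    (hxa : a (Fin.last n) < ⟪x, a⟫) : x (Fin.last n) ≠ 1 := by
  intro hN
  have hinit : init x = 0 := by
    simpa [hN] using norm_init_sq_of_norm_eq_one hx
  rw [inner_eq_inner_init_add, hinit, inner_zero_left, hN, zero_add, one_mul] at hxa
  exact hxa.false

theorem inner_invStereo_sub_eq {a : EuclideanSpace ℝ (Fin (n + 1))} (ha : ‖a‖ = 1) {k s : ℝ}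
    (hks : s ^ 2 + k ^ 2 = 1) (hk : k - a (Fin.last n) ≠ 0) (ξ : EuclideanSpace ℝ (Fin n)) :
    (‖ξ‖ ^ 2 + 1) * (⟪invStereo n ξ, a⟫ - k) =
      (k - a (Fin.last n)) * ((s / (k - a (Fin.last n))) ^ 2 -
        ‖ξ - (k - a (Fin.last n))⁻¹ • init a‖ ^ 2) := by
  rw [inner_eq_inner_init_add, init_invStereo, invStereo_last, norm_sub_sq_real,
    real_inner_smul_left, real_inner_smul_right, norm_smul, mul_pow, norm_inv, Real.norm_eq_abs,
    inv_pow, sq_abs, norm_init_sq_of_norm_eq_one ha, div_pow, eq_sub_of_add_eq hks]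
  field_simp
  ring

end Stereographic

theorem stereo_image_cap (n : ℕ) (θ : ℝ) (hθ : θ ∈ Set.Ioo 0 (Real.pi / 2))
    (a : EuclideanSpace ℝ (Fin (n + 1))) (ha : ‖a‖ = 1)
    (haN : a (Fin.last n) < Real.cos θ)
    (c : EuclideanSpace ℝ (Fin n))
    (hc : ∀ i, c i = a i.castSucc / (Real.cos θ - a (Fin.last n)))
    (r : ℝ) (hr : r = Real.sin θ / (Real.cos θ - a (Fin.last n))) :
    0 < r ∧
    stereo n '' {x : EuclideanSpace ℝ (Fin (n + 1)) |
        ‖x‖ = 1 ∧ (∑ i, x i * a i) > Real.cos θ} =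
      {ξ : EuclideanSpace ℝ (Fin n) | ‖ξ - c‖ < r} := by
  have hd : 0 < Real.cos θ - a (Fin.last n) := sub_pos.2 haN
  have hr0 : 0 < r :=
    hr ▸ div_pos (Real.sin_pos_of_pos_of_lt_pi hθ.1 (by linarith [hθ.2, Real.pi_pos])) hd
  have hc' : c = (Real.cos θ - a (Fin.last n))⁻¹ • init a := by
    ext i
    simp [hc, div_eq_inv_mul]
  refine ⟨hr0, ?_⟩
  simp only [sum_mul_eq_inner, gt_iff_lt]
  rw [stereo_image_eq_preimage_invStereo fun x hx =>
    ⟨hx.1, last_ne_one_of_last_lt_inner hx.1 (haN.trans hx.2)⟩]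
  ext ξ
  rw [Set.mem_preimage, Set.mem_ofPred_eq, Set.mem_ofPred_eq, and_iff_right (norm_invStereo ξ),
    ← sub_pos, ← mul_pos_iff_of_pos_left (by positivity : 0 < ‖ξ‖ ^ 2 + 1),
    inner_invStereo_sub_eq ha (Real.sin_sq_add_cos_sq θ) hd.ne', ← hc', ← hr,
    mul_pos_iff_of_pos_left hd, sub_pos, sq_lt_sq₀ (norm_nonneg _) hr0.le]
end

section
/- Let a ∈ Sⁿ with aᵀe_{n+1} < cos θ, θ ∈ (0, π/2), and let c = J_n a/(cos θ - e_{n+1}ᵀa), r = sin θ/(cos θ - e_{n+1}ᵀa). Then for every x ∈ Sⁿ \ {e_{n+1}} with xᵀa > cos θ, the identity ‖ψ(x) - c‖² = r² - 2(xᵀa - cos θ)/((cos θ - e_{n+1}ᵀa)(1 - e_{n+1}ᵀx)) holds; in particular ‖ψ(x) - c‖ < r. -/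
/-!
With `τ = cos θ - a_{n+1}` and `s = 1 - x_{n+1}` we have `ψ(x) = s⁻¹ J_n x` and `c = τ⁻¹ J_n a`, so
expanding `‖ψ(x) - c‖²` only needs `‖J_n y‖² = ‖y‖² - y_{n+1}²` and
`⟪J_n x, J_n a⟫ = ⟪x, a⟫ - x_{n+1} a_{n+1}`; the identity is then algebra. The subtracted term
is positive, whence `‖ψ(x) - c‖ < r`. That `s > 0` comes from `‖x - e_{n+1}‖² = 2 s`.
-/

open scoped BigOperators

/-- The north pole `e_{n+1}`. -/
noncomputable def northPole (n : ℕ) : EuclideanSpace ℝ (Fin (n + 1)) :=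
  EuclideanSpace.single (Fin.last n) (1 : ℝ)

open RealInnerProductSpace

/-- The paper's `J_n`. -/
noncomputable def initCoords (n : ℕ) (y : EuclideanSpace ℝ (Fin (n + 1))) :
    EuclideanSpace ℝ (Fin n) :=
  WithLp.toLp 2 (fun i : Fin n => y i.castSucc)

section

variable {n : ℕ}

theorem norm_sq_initCoords (y : EuclideanSpace ℝ (Fin (n + 1))) :
    ‖initCoords n y‖ ^ 2 = ‖y‖ ^ 2 - y (Fin.last n) ^ 2 := by
  simp only [EuclideanSpace.real_norm_sq_eq, Fin.sum_univ_castSucc (n := n), initCoords]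
  ring

theorem inner_initCoords (x y : EuclideanSpace ℝ (Fin (n + 1))) :
    ⟪initCoords n x, initCoords n y⟫ = ⟪x, y⟫ - x (Fin.last n) * y (Fin.last n) := by
  simp only [PiLp.inner_apply, Fin.sum_univ_castSucc (n := n), initCoords,
    RCLike.inner_apply, conj_trivial]
  ring

theorem stereo_eq_smul_initCoords (x : EuclideanSpace ℝ (Fin (n + 1))) :
    stereo n x = (1 - x (Fin.last n))⁻¹ • initCoords n x := by
  ext i
  simp [stereo, initCoords, div_eq_inv_mul]

theorem norm_sub_northPole_sq {x : EuclideanSpace ℝ (Fin (n + 1))} (hx : ‖x‖ = 1) :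
    ‖x - northPole n‖ ^ 2 = 2 * (1 - x (Fin.last n)) := by
  rw [norm_sub_sq_real, hx, northPole, EuclideanSpace.inner_single_right]
  simp only [one_pow, Real.ringHom_apply, one_mul, PiLp.norm_single, norm_one]
  ring

theorem last_lt_one_of_ne_northPole {x : EuclideanSpace ℝ (Fin (n + 1))} (hx : ‖x‖ = 1)
    (hne : x ≠ northPole n) : x (Fin.last n) < 1 := by
  have h := norm_sub_northPole_sq hx
  have : 0 < ‖x - northPole n‖ := norm_pos_iff.mpr (sub_ne_zero.mpr hne)
  nlinarith

theorem norm_sq_stereo_sub_smul_initCoords {x a : EuclideanSpace ℝ (Fin (n + 1))}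
    (hx : ‖x‖ = 1) (ha : ‖a‖ = 1) (hxN : x (Fin.last n) ≠ 1) {κ : ℝ} (hκ : κ ≠ a (Fin.last n)) :
    ‖stereo n x - (κ - a (Fin.last n))⁻¹ • initCoords n a‖ ^ 2 =
      (1 - κ ^ 2) / (κ - a (Fin.last n)) ^ 2 -
        2 * (⟪x, a⟫ - κ) / ((κ - a (Fin.last n)) * (1 - x (Fin.last n))) := by
  have hs : 1 - x (Fin.last n) ≠ 0 := sub_ne_zero.mpr (Ne.symm hxN)
  have hτ : κ - a (Fin.last n) ≠ 0 := sub_ne_zero.mpr hκ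
  rw [stereo_eq_smul_initCoords, norm_sub_sq_real, norm_smul, norm_smul, mul_pow, mul_pow,
    real_inner_smul_left, real_inner_smul_right, norm_sq_initCoords, norm_sq_initCoords,
    inner_initCoords, hx, ha, Real.norm_eq_abs, Real.norm_eq_abs, sq_abs, sq_abs]
  field_simp
  ring

end

theorem stereo_cap_identity (n : ℕ) (θ : ℝ) (hθ : θ ∈ Set.Ioo 0 (Real.pi / 2))
    (a : EuclideanSpace ℝ (Fin (n + 1))) (ha : ‖a‖ = 1)
    (haN : a (Fin.last n) < Real.cos θ)
    (c : EuclideanSpace ℝ (Fin n))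
    (hc : ∀ i, c i = a i.castSucc / (Real.cos θ - a (Fin.last n)))
    (r : ℝ) (hr : r = Real.sin θ / (Real.cos θ - a (Fin.last n)))
    (x : EuclideanSpace ℝ (Fin (n + 1))) (hx : ‖x‖ = 1) (hne : x ≠ northPole n)
    (hxa : (∑ i, x i * a i) > Real.cos θ) :
    ‖stereo n x - c‖ ^ 2 =
        r ^ 2 - 2 * ((∑ i, x i * a i) - Real.cos θ) /
          ((Real.cos θ - a (Fin.last n)) * (1 - x (Fin.last n))) ∧
    ‖stereo n x - c‖ < r := by
  have hτ : 0 < Real.cos θ - a (Fin.last n) := sub_pos.mpr haN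
  have hxN : x (Fin.last n) < 1 := last_lt_one_of_ne_northPole hx hne
  have hs : 0 < 1 - x (Fin.last n) := sub_pos.mpr hxN
  have hc' : c = (Real.cos θ - a (Fin.last n))⁻¹ • initCoords n a := by
    ext i
    simp [hc, initCoords, div_eq_inv_mul]
  have hinner : ⟪x, a⟫ = ∑ i, x i * a i := by
    simp [PiLp.inner_apply, mul_comm]
  have key : ‖stereo n x - c‖ ^ 2 = r ^ 2 - 2 * ((∑ i, x i * a i) - Real.cos θ) /
      ((Real.cos θ - a (Fin.last n)) * (1 - x (Fin.last n))) := by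
    rw [hc', norm_sq_stereo_sub_smul_initCoords hx ha hxN.ne haN.ne', hinner, hr, div_pow,
      Real.sin_sq]
  refine ⟨key, lt_of_pow_lt_pow_left₀ 2 ?_ ?_⟩
  · rw [hr]
    exact div_nonneg (Real.sin_nonneg_of_nonneg_of_le_pi hθ.1.le (by linarith [hθ.2, Real.pi_pos]))
      hτ.le
  · rw [key]
    have hgap : 0 < 2 * ((∑ i, x i * a i) - Real.cos θ) /
        ((Real.cos θ - a (Fin.last n)) * (1 - x (Fin.last n))) :=
      div_pos (by linarith) (mul_pos hτ hs)
    linarith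
end

section
/- For x on the unit 2-sphere, let Π(x) ∈ ℝ^{3×3} be the cross-product matrix (Π(x)u = x × u). Then for x ≠ e₃, the matrix Σ(x) = ∇ψ(x)Π(x) satisfies Σ(x)Σ(x)ᵀ = (1 - e₃ᵀx)⁻²·I₂, where ∇ψ(x) is the Jacobian of the stereographic projection from the north pole e₃. -/
/-- Jacobian matrix of the stereographic projection at `x` (case `n = 2`). -/
noncomputable def stereoJacMat2 (x : EuclideanSpace ℝ (Fin 3)) :
    Matrix (Fin 2) (Fin 3) ℝ :=
  Matrix.of fun i j =>
    ((1 - x (Fin.last 2)) * (if j = i.castSucc then 1 else 0) +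
      x i.castSucc * (if j = Fin.last 2 then 1 else 0)) / (1 - x (Fin.last 2)) ^ 2

/-- Cross-product matrix: `(crossMat x) *ᵥ u = x × u`. -/
def crossMat (x : EuclideanSpace ℝ (Fin 3)) : Matrix (Fin 3) (Fin 3) ℝ :=
  !![0, -x 2, x 1; x 2, 0, -x 0; -x 1, x 0, 0]

/-!
Write `c = 1 - x₃` and `∇ψ(x) = c⁻² N` with `N = J₂(c I₃ + x e₃ᵀ)`. On the unit sphere
`Π Πᵀ = I₃ - x xᵀ`, and `N x = y := (x₁, x₂)` while `N Nᵀ = c² I₂ + y yᵀ`, so the rank-one terms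
cancel in `N Π Πᵀ Nᵀ = N Nᵀ - (N x)(N x)ᵀ = c² I₂`; the scalar factors give `c⁻⁴ c² = c⁻²`.
-/

open Matrix

theorem EuclideanSpace.norm_sq_fin_three (x : EuclideanSpace ℝ (Fin 3)) :
    ‖x‖ ^ 2 = x 0 ^ 2 + x 1 ^ 2 + x 2 ^ 2 := by
  rw [EuclideanSpace.real_norm_sq_eq, Fin.sum_univ_three]

theorem crossMat_mul_transpose (x : EuclideanSpace ℝ (Fin 3)) :
    crossMat x * (crossMat x)ᵀ = ‖x‖ ^ 2 • (1 : Matrix (Fin 3) (Fin 3) ℝ) - vecMulVec x x := by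
  rw [EuclideanSpace.norm_sq_fin_three]
  ext i j
  fin_cases i <;> fin_cases j <;>
    simp [crossMat, mul_apply, Fin.sum_univ_three, one_apply, vecMulVec_apply] <;> ring

def stereoJacNum (x : EuclideanSpace ℝ (Fin 3)) : Matrix (Fin 2) (Fin 3) ℝ :=
  !![1 - x 2, 0, x 0; 0, 1 - x 2, x 1]

theorem stereoJacMat2_eq_smul (x : EuclideanSpace ℝ (Fin 3)) :
    stereoJacMat2 x = ((1 - x 2) ^ 2)⁻¹ • stereoJacNum x := by
  ext i j
  fin_cases i <;> fin_cases j <;>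
    simp [stereoJacMat2, stereoJacNum, Fin.last, Fin.ext_iff, div_eq_inv_mul]

theorem stereoJacNum_mulVec_self (x : EuclideanSpace ℝ (Fin 3)) :
    stereoJacNum x *ᵥ x = ![x 0, x 1] := by
  ext i
  fin_cases i <;> simp [stereoJacNum, mulVec, dotProduct, Fin.sum_univ_three] <;> ring

theorem stereoJacNum_mul_transpose (x : EuclideanSpace ℝ (Fin 3)) :
    stereoJacNum x * (stereoJacNum x)ᵀ =
      (1 - x 2) ^ 2 • (1 : Matrix (Fin 2) (Fin 2) ℝ) + vecMulVec ![x 0, x 1] ![x 0, x 1] := by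
  ext i j
  fin_cases i <;> fin_cases j <;>
    simp [stereoJacNum, mul_apply, Fin.sum_univ_three, one_apply] <;> ring

theorem Matrix.mul_vecMulVec_mul_transpose {m n R : Type*} [Fintype n] [CommSemiring R]
    (M : Matrix m n R) (v : n → R) :
    M * vecMulVec v v * Mᵀ = vecMulVec (M *ᵥ v) (M *ᵥ v) := by
  rw [mul_vecMulVec, vecMulVec_mul, vecMul_transpose]

theorem stereoJacNum_crossMat_mul_transpose {x : EuclideanSpace ℝ (Fin 3)} (hx : ‖x‖ = 1) :
    (stereoJacNum x * crossMat x) * (stereoJacNum x * crossMat x)ᵀ =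
      (1 - x 2) ^ 2 • (1 : Matrix (Fin 2) (Fin 2) ℝ) := by
  set N := stereoJacNum x
  calc (N * crossMat x) * (N * crossMat x)ᵀ = N * (crossMat x * (crossMat x)ᵀ) * Nᵀ := by
        simp only [transpose_mul, Matrix.mul_assoc]
    _ = N * Nᵀ - N * vecMulVec x x * Nᵀ := by
        rw [crossMat_mul_transpose, hx, one_pow, one_smul, Matrix.mul_sub, Matrix.sub_mul,
          Matrix.mul_one]
    _ = (1 - x 2) ^ 2 • 1 := by
        rw [mul_vecMulVec_mul_transpose, stereoJacNum_mulVec_self, stereoJacNum_mul_transpose,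
          add_sub_cancel_right]

theorem sigma_sigma_transpose_general (x : EuclideanSpace ℝ (Fin 3))
    (hx : ‖x‖ = 1) :
    (stereoJacMat2 x * crossMat x) * Matrix.transpose (stereoJacMat2 x * crossMat x) =
      ((1 - x 2) ^ 2)⁻¹ • (1 : Matrix (Fin 2) (Fin 2) ℝ) := by
  rw [stereoJacMat2_eq_smul, Matrix.smul_mul, transpose_smul, Matrix.smul_mul, Matrix.mul_smul,
    stereoJacNum_crossMat_mul_transpose hx, smul_smul, smul_smul]
  congr 1
  simpa only [inv_inv] using mul_self_mul_inv ((1 - x 2) ^ 2 : ℝ)⁻¹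

theorem sigma_sigma_transpose (x : EuclideanSpace ℝ (Fin 3))
    (hx : ‖x‖ = 1) (hne : x ≠ EuclideanSpace.single (Fin.last 2) (1 : ℝ)) :
    (stereoJacMat2 x * crossMat x) * Matrix.transpose (stereoJacMat2 x * crossMat x) =
      ((1 - x 2) ^ 2)⁻¹ • (1 : Matrix (Fin 2) (Fin 2) ℝ) :=
  sigma_sigma_transpose_general x hx
end
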